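/- Let q be a prime with q ≡ 5 (mod 8) and δ an integer with all odd prime divisors p of δ satisfying (q/p) = -1, and gcd(q, δ) = 1. For the choice (y, z, w) = (1, 1, 1), the element μ = yi + zj + wk of the quaternion algebra D = (q, δ/ℚ) satisfies: μ has reduced trace 0, μ² = q + δ - qδ ∈ ℤ, and ℚ(√(q + δ - qδ)) is a quadratic field (i.e., q + δ - qδ is not a perfect square) in which no odd prime dividing δ ramifies, provided δ has an odd prime divisor. -/

import Mathlib

/-! For an odd prime `p ∣ δ`, `ε = q + δ - qδ ≡ q (mod p)` is a quadratic non-residue mod `p`,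
so `ε` is neither divisible by `p` nor a square in `ℤ`. -/

namespace QuaternionAlgebra

variable {R : Type*} [CommRing R] {a b : R}

theorem pure_add_star (y z w : R) :
    (⟨0, y, z, w⟩ : QuaternionAlgebra R a 0 b) + star ⟨0, y, z, w⟩ = 0 := by
  rw [self_add_star']
  simp

theorem pure_mul_self (y z w : R) :
    (⟨0, y, z, w⟩ : QuaternionAlgebra R a 0 b) * ⟨0, y, z, w⟩ =
      algebraMap R _ (a * y ^ 2 + b * z ^ 2 - a * b * w ^ 2) := by
  rw [algebraMap_eq]
  ext <;> simp <;> ring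

end QuaternionAlgebra

namespace Int

variable {n : ℤ} {p : ℕ}

theorem not_isSquare_of_not_isSquare_cast (h : ¬ IsSquare (n : ZMod p)) : ¬ IsSquare n :=
  fun hn => h (hn.map (Int.castRingHom (ZMod p)))

theorem not_dvd_of_not_isSquare_cast (h : ¬ IsSquare (n : ZMod p)) : ¬ (p : ℤ) ∣ n := by
  intro hdvd
  rw [(ZMod.intCast_zmod_eq_zero_iff_dvd n p).2 hdvd] at h
  exact h ⟨0, (mul_zero 0).symm⟩

theorem cast_add_sub_mul_of_dvd_right (q : ℤ) {δ : ℤ} (hδ : (p : ℤ) ∣ δ) :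
    ((q + δ - q * δ : ℤ) : ZMod p) = q := by
  push_cast
  rw [(ZMod.intCast_zmod_eq_zero_iff_dvd δ p).2 hδ]
  ring

end Int

theorem stmt_18_general (q : ℕ) (δ : ℤ)
    (hres : ∀ p : ℕ, p.Prime → p ≠ 2 → (p : ℤ) ∣ δ → ¬ IsSquare ((q : ZMod p)))
    (hodd : ∃ p : ℕ, p.Prime ∧ p ≠ 2 ∧ (p : ℤ) ∣ δ) :
    ((⟨0, 1, 1, 1⟩ : QuaternionAlgebra ℚ (q : ℚ) 0 (δ : ℚ)) +
        star (⟨0, 1, 1, 1⟩ : QuaternionAlgebra ℚ (q : ℚ) 0 (δ : ℚ)) = 0) ∧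
    ((⟨0, 1, 1, 1⟩ : QuaternionAlgebra ℚ (q : ℚ) 0 (δ : ℚ)) *
        (⟨0, 1, 1, 1⟩ : QuaternionAlgebra ℚ (q : ℚ) 0 (δ : ℚ)) =
      algebraMap ℚ (QuaternionAlgebra ℚ (q : ℚ) 0 (δ : ℚ))
        ((q : ℚ) + (δ : ℚ) - (q : ℚ) * (δ : ℚ))) ∧
    ¬ IsSquare ((q : ℤ) + δ - (q : ℤ) * δ) ∧
    ∀ p : ℕ, p.Prime → p ≠ 2 → (p : ℤ) ∣ δ → ¬ (p : ℤ) ∣ ((q : ℤ) + δ - (q : ℤ) * δ) := by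
  have nonresidue : ∀ p : ℕ, p.Prime → p ≠ 2 → (p : ℤ) ∣ δ →
      ¬ IsSquare ((((q : ℤ) + δ - (q : ℤ) * δ : ℤ)) : ZMod p) := by
    intro p hp hp2 hδ
    rw [Int.cast_add_sub_mul_of_dvd_right _ hδ, Int.cast_natCast]
    exact hres p hp hp2 hδ
  refine ⟨QuaternionAlgebra.pure_add_star _ _ _, ?_, ?_, ?_⟩
  · rw [QuaternionAlgebra.pure_mul_self]
    congr 1
    ring
  · obtain ⟨p, hp, hp2, hδ⟩ := hodd
    exact Int.not_isSquare_of_not_isSquare_cast (nonresidue p hp hp2 hδ)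
  · intro p hp hp2 hδ
    exact Int.not_dvd_of_not_isSquare_cast (nonresidue p hp hp2 hδ)

/-- For `(y,z,w) = (1,1,1)` the element `μ = i + j + k` of the quaternion algebra
`(q, δ / ℚ)` has reduced trace `0`, `μ² = q + δ - qδ`, `q + δ - qδ` is not a perfect
square, and no odd prime dividing `δ` divides (hence ramifies in `ℚ(√·)` of)
`q + δ - qδ`. -/
theorem stmt_18 (q : ℕ) (hq : q.Prime) (h5 : q % 8 = 5) (δ : ℤ)
    (hcop : IsCoprime (q : ℤ) δ)
    (hres : ∀ p : ℕ, p.Prime → p ≠ 2 → (p : ℤ) ∣ δ → ¬ IsSquare ((q : ZMod p)))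
    (hodd : ∃ p : ℕ, p.Prime ∧ p ≠ 2 ∧ (p : ℤ) ∣ δ) :
    ((⟨0, 1, 1, 1⟩ : QuaternionAlgebra ℚ (q : ℚ) 0 (δ : ℚ)) +
        star (⟨0, 1, 1, 1⟩ : QuaternionAlgebra ℚ (q : ℚ) 0 (δ : ℚ)) = 0) ∧
    ((⟨0, 1, 1, 1⟩ : QuaternionAlgebra ℚ (q : ℚ) 0 (δ : ℚ)) *
        (⟨0, 1, 1, 1⟩ : QuaternionAlgebra ℚ (q : ℚ) 0 (δ : ℚ)) =
      algebraMap ℚ (QuaternionAlgebra ℚ (q : ℚ) 0 (δ : ℚ))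
        ((q : ℚ) + (δ : ℚ) - (q : ℚ) * (δ : ℚ))) ∧
    ¬ IsSquare ((q : ℤ) + δ - (q : ℤ) * δ) ∧
    ∀ p : ℕ, p.Prime → p ≠ 2 → (p : ℤ) ∣ δ → ¬ (p : ℤ) ∣ ((q : ℤ) + δ - (q : ℤ) * δ) :=
  stmt_18_general q δ hres hodd
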